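/- If n ≥ 3, then the transition matrix P_KTV of the KTV-switch chain on Ω = Ω(r,c,F) is positive semidefinite, i.e., all eigenvalues of P_KTV are non-negative. In particular the KTV-switch chain does not need to be made lazy. -/

import Mathlib

open Finset

attribute [local instance] Classical.propDecidable

/-- A binary `m × n` matrix, with `true` representing a `1` entry. -/
abbrev BinMat (m n : ℕ) := Fin m → Fin n → Bool

/-- `A ∈ Ω(r,c,F)`: the binary matrix `A` has row sums `r`, column sums `c`, and is zero
on the forbidden entries `F`. -/
def inOmega {m n : ℕ} (r : Fin m → ℕ) (c : Fin n → ℕ) (F : Finset (Fin m × Fin n))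
    (A : BinMat m n) : Prop :=
  (∀ i : Fin m, (univ.filter fun k => A i k = true).card = r i) ∧
  (∀ k : Fin n, (univ.filter fun i => A i k = true).card = c k) ∧
  ∀ p ∈ F, A p.1 p.2 = false

/-- `U_ij(A)`: columns with a `1` in row `i`, a `0` in row `j`, and `(j,k)` not forbidden. -/
def Uset {m n : ℕ} (F : Finset (Fin m × Fin n)) (i j : Fin m) (A : BinMat m n) :
    Finset (Fin n) :=
  univ.filter fun k => A i k = true ∧ A j k = false ∧ (j, k) ∉ F

/-- `L_ij(A)`: columns with a `0` in row `i`, a `1` in row `j`, and `(i,k)` not forbidden. -/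
def Lset {m n : ℕ} (F : Finset (Fin m × Fin n)) (i j : Fin m) (A : BinMat m n) :
    Finset (Fin n) :=
  univ.filter fun k => A i k = false ∧ A j k = true ∧ (i, k) ∉ F

/-- `u_ij(A) = |U_ij(A)|`. -/
def usize {m n : ℕ} (F : Finset (Fin m × Fin n)) (i j : Fin m) (A : BinMat m n) : ℕ :=
  (Uset F i j A).card

/-- `l_ij(A) = |L_ij(A)|`. -/
def lsize {m n : ℕ} (F : Finset (Fin m × Fin n)) (i j : Fin m) (A : BinMat m n) : ℕ :=
  (Lset F i j A).card

/-- `B ∈ N_ij(A)`: `B ∈ Ω` and `B` agrees with `A` outside `{i,j} × (U_ij(A) ∪ L_ij(A))`. -/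
def inNbhd {m n : ℕ} (r : Fin m → ℕ) (c : Fin n → ℕ) (F : Finset (Fin m × Fin n))
    (i j : Fin m) (A B : BinMat m n) : Prop :=
  inOmega r c F B ∧
  ∀ k l, (k, l) ∉ (({i, j} : Finset (Fin m)) ×ˢ (Uset F i j A ∪ Lset F i j A)) →
    B k l = A k l

/-- `A` and `B` are switch-adjacent for rows `i, j`: `A - B` has exactly four nonzero
entries, all in rows `i` and `j`, and the columns containing them have no forbidden
entries in rows `i` and `j`. -/
def switchAdjIJ {m n : ℕ} (F : Finset (Fin m × Fin n)) (i j : Fin m)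
    (A B : BinMat m n) : Prop :=
  ((univ : Finset (Fin m × Fin n)).filter fun p => A p.1 p.2 ≠ B p.1 p.2).card = 4 ∧
  (∀ p ∈ (univ : Finset (Fin m × Fin n)).filter fun p => A p.1 p.2 ≠ B p.1 p.2,
    p.1 = i ∨ p.1 = j) ∧
  ∀ p ∈ (univ : Finset (Fin m × Fin n)).filter fun p => A p.1 p.2 ≠ B p.1 p.2,
    (i, p.2) ∉ F ∧ (j, p.2) ∉ F

/-- The pairs of rows `i < j`. -/
def rowPairs (m : ℕ) : Finset (Fin m × Fin m) :=
  univ.filter fun p => p.1 < p.2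

/-- The state space `Ω(r,c,F)` as a type. -/
abbrev OmegaType {m n : ℕ} (r : Fin m → ℕ) (c : Fin n → ℕ) (F : Finset (Fin m × Fin n)) :=
  {A : BinMat m n // inOmega r c F A}

/-- Transition matrix of the KTV-switch chain on `Ω(r,c,F)` (the `γ`-switch chain with
`γ = 2/(n(n-1))`). -/
noncomputable def PKTV {m n : ℕ} (r : Fin m → ℕ) (c : Fin n → ℕ)
    (F : Finset (Fin m × Fin n)) :
    Matrix (OmegaType r c F) (OmegaType r c F) ℝ :=
  Matrix.of fun A B =>
    if A = B then
      (m.choose 2 : ℝ)⁻¹ *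
        ∑ p ∈ rowPairs m,
          (1 - (usize F p.1 p.2 A.val : ℝ) * (lsize F p.1 p.2 A.val : ℝ) *
            (2 / ((n : ℝ) * ((n : ℝ) - 1))))
    else if ∃ p ∈ rowPairs m, switchAdjIJ F p.1 p.2 A.val B.val then
      (m.choose 2 : ℝ)⁻¹ * (2 / ((n : ℝ) * ((n : ℝ) - 1)))
    else 0


/-!
`P_KTV` is the average over the row pairs `i < j` of `diag(1 - γ u_ij l_ij) + γ Adj_ij`, where
`γ = 2/(n(n-1))` and `Adj_ij` is the adjacency matrix of switches in rows `i, j`.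
Moving the `1` of a column `k ∈ U_ij(A)` from row `i` to row `j` gives a matrix `M` with
`M Mᵀ = diag(u_ij) + Adj_ij`: two distinct matrices of `Ω` reach a common intermediate matrix
iff they are switch-adjacent, and then in exactly one way. Adjacent matrices have the same
`u_ij` and `l_ij`, so using these moves where `u_ij ≤ l_ij` and the moves from row `j` to
row `i` elsewhere gives `diag(min(u_ij, l_ij)) + Adj_ij ⪰ 0`. The remaining diagonal part
`1 - γ (u l + min(u, l))` is non-negative because `u + l ≤ n` and `n ≥ 3`.
-/

open Matrix

lemma add_eq_add_of_sum_eq_of_eqOn_compl {α M : Type*} [Fintype α] [DecidableEq α]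
    [AddCancelCommMonoid M] {f g : α → M} {a b : α} (hab : a ≠ b)
    (hsum : ∑ x, f x = ∑ x, g x) (hfg : ∀ x, x ≠ a → x ≠ b → f x = g x) :
    f a + f b = g a + g b := by
  have hb : b ∈ univ.erase a := mem_erase.2 ⟨hab.symm, mem_univ b⟩
  rw [← add_sum_erase _ _ (mem_univ a), ← add_sum_erase _ _ hb,
    ← add_sum_erase _ _ (mem_univ a), ← add_sum_erase _ _ hb,
    sum_congr rfl fun x hx => hfg x (mem_erase.1 (mem_erase.1 hx).2).1 (mem_erase.1 hx).1,
    ← add_assoc, ← add_assoc] at hsum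
  exact add_right_cancel hsum

lemma exists_lt_of_sum_eq_of_ne {α : Type*} [Fintype α] {f g : α → ℕ}
    (hsum : ∑ x, f x = ∑ x, g x) (hfg : f ≠ g) : ∃ x, g x < f x := by
  by_contra! hle
  exact hfg (funext ((sum_eq_sum_iff_of_le fun x _ => hle x).1 hsum · (mem_univ _)))

lemma card_filter_eq_sum_toNat {α : Type*} [Fintype α] (P : α → Bool) :
    #{a | P a = true} = ∑ a, (P a).toNat := by
  rw [card_filter]
  exact sum_congr rfl fun a _ => by cases P a <;> rfl

lemma sum_card_fiber_mul_card_fiber {α β γ : Type*} [Fintype γ] [DecidableEq γ]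
    (s : Finset α) (t : Finset β) (f : α → γ) (g : β → γ) :
    ∑ x, #{a ∈ s | f a = x} * #{b ∈ t | g b = x} = #{p ∈ s ×ˢ t | f p.1 = g p.2} := by
  rw [card_eq_sum_card_fiberwise (f := fun p => f p.1) (t := univ) fun _ _ => mem_univ _]
  refine sum_congr rfl fun x _ => ?_
  rw [filter_filter, ← card_product, ← filter_product]
  congr 1
  exact filter_congr fun p _ => by constructor <;> rintro ⟨h1, h2⟩ <;> simp_all

def diffSet {m n : ℕ} (A B : BinMat m n) : Finset (Fin m × Fin n) :=
  univ.filter fun p => A p.1 p.2 ≠ B p.1 p.2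

def moveEntry {m n : ℕ} (i j : Fin m) (k : Fin n) (A : BinMat m n) : BinMat m n :=
  fun a b => if a = i ∧ b = k then false else if a = j ∧ b = k then true else A a b

section Switch

variable {m n : ℕ} {r : Fin m → ℕ} {c : Fin n → ℕ} {F : Finset (Fin m × Fin n)}
  {i j : Fin m} {A B : BinMat m n} {k k' : Fin n}

lemma mem_diffSet {p : Fin m × Fin n} : p ∈ diffSet A B ↔ A p.1 p.2 ≠ B p.1 p.2 := by
  simp [diffSet]

lemma mem_Uset : k ∈ Uset F i j A ↔ A i k = true ∧ A j k = false ∧ (j, k) ∉ F := by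
  simp [Uset]

lemma switchAdjIJ_iff : switchAdjIJ F i j A B ↔ #(diffSet A B) = 4 ∧
    (∀ p ∈ diffSet A B, p.1 = i ∨ p.1 = j) ∧
      ∀ p ∈ diffSet A B, (i, p.2) ∉ F ∧ (j, p.2) ∉ F :=
  Iff.rfl

lemma switchAdjIJ.ne (h : switchAdjIJ F i j A B) : A ≠ B := by
  rintro rfl
  simpa [diffSet] using h.1

@[simp]
lemma not_switchAdjIJ_self : ¬switchAdjIJ F i j A A := fun h => h.ne rfl

lemma switchAdjIJ.symm (h : switchAdjIJ F i j A B) : switchAdjIJ F i j B A := by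
  have hD : diffSet B A = diffSet A B := by ext p; simp [mem_diffSet, ne_comm]
  rwa [switchAdjIJ_iff, hD]

lemma switchAdjIJ_comm : switchAdjIJ F j i A B ↔ switchAdjIJ F i j A B := by
  simp only [switchAdjIJ_iff, or_comm, and_comm]

lemma inOmega.notMem (hA : inOmega r c F A) {a : Fin m} {b : Fin n} (h : A a b = true) :
    (a, b) ∉ F := fun hF => by simp [hA.2.2 _ hF] at h

lemma Uset_swap : Uset F j i A = Lset F i j A := by
  ext b; simp only [Uset, Lset, mem_filter]; tauto

lemma usize_add_lsize_le : usize F i j A + lsize F i j A ≤ n := by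
  have hdisj : Disjoint (Uset F i j A) (Lset F i j A) :=
    disjoint_filter.2 fun b _ hU hL => by simp [hU.1] at hL
  rw [usize, lsize, ← card_union_of_disjoint hdisj]
  exact (card_le_univ _).trans (Fintype.card_fin n).le

lemma moveEntry_column_inj (hk : A i k = true) :
    moveEntry i j k A = moveEntry i j k' A ↔ k = k' := by
  refine ⟨fun h => ?_, fun h => h ▸ rfl⟩
  have := congrFun (congrFun h i) k
  by_contra hkk
  simp [moveEntry, hkk, hk] at this

lemma eq_of_moveEntry_eq (hA : k ∈ Uset F i j A) (hB : k ∈ Uset F i j B)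
    (h : moveEntry i j k A = moveEntry i j k B) : A = B := by
  rw [mem_Uset] at hA hB
  funext a b
  have := congrFun (congrFun h a) b
  by_cases hai : a = i <;> by_cases haj : a = j <;> by_cases hb : b = k <;>
    simp_all [moveEntry]

lemma ne_of_moveEntry_eq (hAB : A ≠ B) (hk : k ∈ Uset F i j A) (hk' : k' ∈ Uset F i j B)
    (h : moveEntry i j k A = moveEntry i j k' B) : k ≠ k' := by
  rintro rfl
  exact hAB (eq_of_moveEntry_eq hk hk' h)

lemma Uset_moveEntry (hij : i ≠ j) : Uset F i j (moveEntry i j k A) = (Uset F i j A).erase k := by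
  ext b
  by_cases hb : b = k
  · simp [Uset, moveEntry, hb]
  · simp [Uset, moveEntry, hb, hij.symm]

lemma Lset_moveEntry (hij : i ≠ j) (hik : (i, k) ∉ F) :
    Lset F i j (moveEntry i j k A) = insert k (Lset F i j A) := by
  ext b
  by_cases hb : b = k
  · simp [Lset, moveEntry, hb, hij.symm, hik]
  · simp [Lset, moveEntry, hb, hij.symm]

lemma diffSet_eq_of_moveEntry_eq (hij : i ≠ j) (hkk : k ≠ k') (hk : k ∈ Uset F i j A)
    (hk' : k' ∈ Uset F i j B) (h : moveEntry i j k A = moveEntry i j k' B) :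
    diffSet A B = ({i, j} : Finset (Fin m)) ×ˢ ({k, k'} : Finset (Fin n)) := by
  rw [mem_Uset] at hk hk'
  ext ⟨a, b⟩
  have := congrFun (congrFun h a) b
  simp only [mem_diffSet, mem_product, mem_insert, mem_singleton]
  by_cases hai : a = i <;> by_cases haj : a = j <;> by_cases hbk : b = k <;>
    by_cases hbk' : b = k' <;> simp_all [moveEntry]

lemma switchAdjIJ_of_moveEntry_eq (hij : i ≠ j) (hA : inOmega r c F A) (hB : inOmega r c F B)
    (hAB : A ≠ B) (hk : k ∈ Uset F i j A) (hk' : k' ∈ Uset F i j B)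
    (h : moveEntry i j k A = moveEntry i j k' B) : switchAdjIJ F i j A B := by
  have hkk := ne_of_moveEntry_eq hAB hk hk' h
  have hD := diffSet_eq_of_moveEntry_eq hij hkk hk hk' h
  rw [mem_Uset] at hk hk'
  refine switchAdjIJ_iff.2 ⟨?_, ?_, ?_⟩ <;> rw [hD]
  · rw [card_product, card_pair hij, card_pair hkk]
  · intro p hp
    simpa using (mem_product.1 hp).1
  · intro p hp
    rcases mem_insert.1 (mem_product.1 hp).2 with hb | hb
    · rw [hb]; exact ⟨hA.notMem hk.1, hk.2.2⟩
    · rw [mem_singleton.1 hb]; exact ⟨hB.notMem hk'.1, hk'.2.2⟩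

lemma moveEntry_eq_unique (hij : i ≠ j) (hAB : A ≠ B) {k₂ k₂' : Fin n}
    (hk : k ∈ Uset F i j A) (hk' : k' ∈ Uset F i j B)
    (h : moveEntry i j k A = moveEntry i j k' B) (hk₂ : k₂ ∈ Uset F i j A)
    (hk₂' : k₂' ∈ Uset F i j B) (h₂ : moveEntry i j k₂ A = moveEntry i j k₂' B) :
    k₂ = k ∧ k₂' = k' := by
  have hD := diffSet_eq_of_moveEntry_eq hij (ne_of_moveEntry_eq hAB hk hk' h) hk hk' h
  have hD₂ :=
    diffSet_eq_of_moveEntry_eq hij (ne_of_moveEntry_eq hAB hk₂ hk₂' h₂) hk₂ hk₂' h₂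
  -- `(i, k₂)` lies in the difference set, and `A i k' = false` excludes `k₂ = k'`.
  have hk₂mem : (i, k₂) ∈ diffSet A B := by rw [hD₂]; simp
  have hk'mem : (i, k') ∈ diffSet A B := by rw [hD]; simp
  have hk₂k : k₂ = k := by
    rcases (by simpa [hD] using hk₂mem : k₂ = k ∨ k₂ = k') with hb | rfl
    · exact hb
    · simp [mem_diffSet, (mem_Uset.1 hk₂).1, (mem_Uset.1 hk').1] at hk'mem
  subst hk₂k
  exact ⟨rfl, (moveEntry_column_inj (mem_Uset.1 hk₂').1).1 (h₂.symm.trans h)⟩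

lemma switchAdjIJ.apply_eq (h : switchAdjIJ F i j A B) {a : Fin m} (hai : a ≠ i) (haj : a ≠ j)
    (b : Fin n) : A a b = B a b := by
  by_contra hab
  rcases h.2.1 (a, b) (mem_diffSet.2 hab) with h' | h' <;> contradiction

/-- Equal column sums force a column that changes in row `i` or `j` to be swapped. -/
lemma switchAdjIJ.column_swap (hij : i ≠ j) (hA : inOmega r c F A) (hB : inOmega r c F B)
    (h : switchAdjIJ F i j A B) {b : Fin n} (hb : A i b ≠ B i b ∨ A j b ≠ B j b) :
    B i b = A j b ∧ B j b = A i b := by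
  have hcol := add_eq_add_of_sum_eq_of_eqOn_compl (f := fun a => (A a b).toNat)
    (g := fun a => (B a b).toNat) hij
    (by rw [← card_filter_eq_sum_toNat, ← card_filter_eq_sum_toNat, hA.2.1, hB.2.1])
    fun a hai haj => by rw [h.apply_eq hai haj]
  revert hb hcol
  cases A i b <;> cases A j b <;> cases B i b <;> cases B j b <;> simp

lemma switchAdjIJ.exists_row_change (hij : i ≠ j) (hA : inOmega r c F A)
    (hB : inOmega r c F B) (h : switchAdjIJ F i j A B) : ∃ k, A i k = true ∧ B i k = false := by
  obtain ⟨hcard, hrows, -⟩ := switchAdjIJ_iff.1 h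
  obtain ⟨⟨a, b⟩, hp⟩ : (diffSet A B).Nonempty := card_pos.1 (by rw [hcard]; norm_num)
  have hib : A i b ≠ B i b := by
    rcases hrows _ hp with rfl | rfl
    · exact mem_diffSet.1 hp
    · obtain ⟨h1, h2⟩ := h.column_swap hij hA hB (Or.inr (mem_diffSet.1 hp))
      rw [h1, ← h2]
      exact (mem_diffSet.1 hp).symm
  have hrow : ∀ A : BinMat m n, inOmega r c F A → ∑ b, (A i b).toNat = r i := fun A hA => by
    rw [← card_filter_eq_sum_toNat, hA.1]
  have hne : (fun b => (A i b).toNat) ≠ fun b => (B i b).toNat := fun heq => by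
    have := congrFun heq b
    revert hib this
    cases A i b <;> cases B i b <;> simp
  obtain ⟨k, hk⟩ := exists_lt_of_sum_eq_of_ne ((hrow A hA).trans (hrow B hB).symm) hne
  exact ⟨k, by revert hk; cases A i k <;> cases B i k <;> simp⟩

lemma exists_moveEntry_eq_of_switchAdjIJ (hij : i ≠ j) (hA : inOmega r c F A)
    (hB : inOmega r c F B) (h : switchAdjIJ F i j A B) :
    ∃ k ∈ Uset F i j A, ∃ k' ∈ Uset F i j B, moveEntry i j k A = moveEntry i j k' B := by
  obtain ⟨hcard, -, hforb⟩ := switchAdjIJ_iff.1 h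
  obtain ⟨k, hAk, hBk⟩ := h.exists_row_change hij hA hB
  obtain ⟨k', hBk', hAk'⟩ := h.symm.exists_row_change hij hB hA
  obtain ⟨hk1, hk2⟩ := h.column_swap (b := k) hij hA hB (Or.inl (by simp [hAk, hBk]))
  obtain ⟨hk'1, hk'2⟩ := h.column_swap (b := k') hij hA hB (Or.inl (by simp [hAk', hBk']))
  have hkk : k ≠ k' := by rintro rfl; simp_all
  have hD : diffSet A B = ({i, j} : Finset (Fin m)) ×ˢ ({k, k'} : Finset (Fin n)) := by
    refine (eq_of_subset_of_card_le (fun p hp => ?_) ?_).symm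
    · simp only [mem_product, mem_insert, mem_singleton] at hp
      obtain ⟨ha | ha, hb | hb⟩ := hp <;> rw [mem_diffSet, ha, hb] <;> simp_all
    · rw [hcard, card_product, card_pair hij, card_pair hkk]
  refine ⟨k, mem_Uset.2 ⟨hAk, by simp_all, (hforb (i, k) ?_).2⟩,
    k', mem_Uset.2 ⟨hBk', by simp_all, (hforb (i, k') ?_).2⟩, ?_⟩
  · simp [mem_diffSet, hAk, hBk]
  · simp [mem_diffSet, hAk', hBk']
  funext a b
  have hab : A a b ≠ B a b ↔ (a = i ∨ a = j) ∧ (b = k ∨ b = k') := by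
    rw [← mem_diffSet (p := (a, b)), hD]; simp
  by_cases hai : a = i <;> by_cases haj : a = j <;> by_cases hbk : b = k <;>
    by_cases hbk' : b = k' <;> simp_all [moveEntry]

lemma switchAdjIJ.usize_eq_and_lsize_eq (hij : i ≠ j) (hA : inOmega r c F A)
    (hB : inOmega r c F B) (h : switchAdjIJ F i j A B) :
    usize F i j B = usize F i j A ∧ lsize F i j B = lsize F i j A := by
  obtain ⟨k, hk, k', hk', heq⟩ := exists_moveEntry_eq_of_switchAdjIJ hij hA hB h
  have hU := congrArg card
    ((Uset_moveEntry (F := F) hij).symm.trans ((congrArg _ heq).trans (Uset_moveEntry hij)))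
  have hL := congrArg card
    ((Lset_moveEntry hij (hA.notMem (mem_Uset.1 hk).1)).symm.trans
      ((congrArg _ heq).trans (Lset_moveEntry hij (hB.notMem (mem_Uset.1 hk').1))))
  have hkL : k ∉ Lset F i j A := by simp [Lset, (mem_Uset.1 hk).1]
  have hk'L : k' ∉ Lset F i j B := by simp [Lset, (mem_Uset.1 hk').1]
  rw [card_erase_of_mem hk, card_erase_of_mem hk'] at hU
  rw [card_insert_of_notMem hkL, card_insert_of_notMem hk'L] at hL
  have := card_pos.2 ⟨k, hk⟩
  have := card_pos.2 ⟨k', hk'⟩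
  unfold usize lsize
  omega

lemma switchAdjIJ.eq_of_mem_rowPairs (hA : inOmega r c F A) (hB : inOmega r c F B)
    {p q : Fin m × Fin m} (hp : p ∈ rowPairs m) (hq : q ∈ rowPairs m)
    (h : switchAdjIJ F p.1 p.2 A B) (h' : switchAdjIJ F q.1 q.2 A B) : p = q := by
  simp only [rowPairs, mem_filter, mem_univ, true_and] at hp hq
  obtain ⟨k, hk, k', hk', heq⟩ := exists_moveEntry_eq_of_switchAdjIJ hp.ne hA hB h
  have hD := diffSet_eq_of_moveEntry_eq hp.ne (ne_of_moveEntry_eq h.ne hk hk' heq) hk hk' heq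
  have hrows := (switchAdjIJ_iff.1 h').2.1
  have h1 : p.1 = q.1 ∨ p.1 = q.2 := hrows (p.1, k) (by rw [hD]; simp)
  have h2 : p.2 = q.1 ∨ p.2 = q.2 := hrows (p.2, k) (by rw [hD]; simp)
  have hpv := Fin.lt_def.1 hp
  have hqv := Fin.lt_def.1 hq
  rcases h1 with h1 | h1 <;> rcases h2 with h2 | h2 <;> rw [h1, h2] at hpv <;>
    first | exact Prod.ext h1 h2 | omega

end Switch

lemma two_mul_mul_add_min_le {n u l : ℕ} (hn : 3 ≤ n) (h : u + l ≤ n) :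
    2 * (u * l + min u l) ≤ n * (n - 1) := by
  wlog hul : u ≤ l generalizing u l
  · rw [Nat.mul_comm u l, min_comm]
    exact this (by omega) (by omega)
  rw [min_eq_left hul]
  obtain ⟨N, rfl⟩ : ∃ N, n = N + 1 := ⟨n - 1, by omega⟩
  rw [Nat.add_sub_cancel]
  rcases Nat.lt_or_ge u 2 with hu | hu
  · interval_cases u <;> nlinarith
  · nlinarith [Nat.mul_le_mul_left u h]

noncomputable def switchRate (n : ℕ) : ℝ := 2 / ((n : ℝ) * ((n : ℝ) - 1))

lemma switchRate_nonneg (n : ℕ) : 0 ≤ switchRate n := by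
  rcases n with _ | n
  · simp [switchRate]
  · unfold switchRate
    push_cast
    rw [add_sub_cancel_right]
    positivity

lemma mul_switchRate_le_one {n u l : ℕ} (hn : 3 ≤ n) (h : u + l ≤ n) :
    ((u * l + min u l : ℕ) : ℝ) * switchRate n ≤ 1 := by
  have hpos : (0 : ℝ) < n * (n - 1) := by
    have : (3 : ℝ) ≤ n := by exact_mod_cast hn
    nlinarith
  have key : ((2 * (u * l + min u l) : ℕ) : ℝ) ≤ ((n * (n - 1) : ℕ) : ℝ) :=
    Nat.cast_le.2 (two_mul_mul_add_min_le hn h)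
  push_cast [Nat.cast_sub (show 1 ≤ n by omega)] at key
  rw [switchRate, mul_div_assoc', div_le_one hpos]
  push_cast
  linarith

section Matrices

variable {m n : ℕ} (r : Fin m → ℕ) (c : Fin n → ℕ) (F : Finset (Fin m × Fin n))
  {i j : Fin m}

noncomputable def switchAdjMat (i j : Fin m) : Matrix (OmegaType r c F) (OmegaType r c F) ℝ :=
  of fun A B => if switchAdjIJ F i j A.1 B.1 then 1 else 0

noncomputable def pairTransMat (i j : Fin m) : Matrix (OmegaType r c F) (OmegaType r c F) ℝ :=
  diagonal (fun A => 1 - (usize F i j A.1 : ℝ) * lsize F i j A.1 * switchRate n) +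
    switchRate n • switchAdjMat r c F i j

noncomputable def moveCount (i j : Fin m) : Matrix (OmegaType r c F) (BinMat m n) ℝ :=
  of fun A D => #{k ∈ Uset F i j A.1 | moveEntry i j k A.1 = D}

variable {r c F}

lemma card_moveEntry_eq_moveEntry (hij : i ≠ j) (A B : OmegaType r c F) :
    #{p ∈ Uset F i j A.1 ×ˢ Uset F i j B.1 | moveEntry i j p.1 A.1 = moveEntry i j p.2 B.1} =
      if A = B then usize F i j A.1 else if switchAdjIJ F i j A.1 B.1 then 1 else 0 := by
  by_cases hAB : A = B
  · subst hAB
    rw [if_pos rfl, usize, ← diag_card (Uset F i j A.1), diag_eq_filter]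
    exact congrArg card (filter_congr fun p hp =>
      moveEntry_column_inj (mem_Uset.1 (mem_product.1 hp).1).1)
  have hAB' : A.1 ≠ B.1 := fun h => hAB (Subtype.ext h)
  rw [if_neg hAB]
  split_ifs with hadj
  · obtain ⟨k, hk, k', hk', heq⟩ := exists_moveEntry_eq_of_switchAdjIJ hij A.2 B.2 hadj
    refine card_eq_one.2
      ⟨(k, k'), eq_singleton_iff_unique_mem.2 ⟨by simp [hk, hk', heq], ?_⟩⟩
    intro p hp
    rw [mem_filter, mem_product] at hp
    obtain ⟨h1, h2⟩ := moveEntry_eq_unique hij hAB' hk hk' heq hp.1.1 hp.1.2 hp.2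
    exact Prod.ext h1 h2
  · refine card_eq_zero.2 (filter_eq_empty_iff.2 fun p hp heq => hadj ?_)
    rw [mem_product] at hp
    exact switchAdjIJ_of_moveEntry_eq hij A.2 B.2 hAB' hp.1 hp.2 heq

lemma moveCount_mul_transpose (hij : i ≠ j) :
    moveCount r c F i j * (moveCount r c F i j)ᵀ =
      diagonal (fun A : OmegaType r c F => (usize F i j A.1 : ℝ)) + switchAdjMat r c F i j := by
  ext A B
  simp only [mul_apply, transpose_apply, moveCount, of_apply, Matrix.add_apply, diagonal_apply,
    switchAdjMat, ← Nat.cast_mul, ← Nat.cast_sum]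
  rw [sum_card_fiber_mul_card_fiber, card_moveEntry_eq_moveEntry hij]
  by_cases hAB : A = B
  · subst hAB
    simp
  · split_ifs <;> simp

lemma posSemidef_diagonal_usize_add_switchAdjMat (hij : i ≠ j) :
    (diagonal (fun A : OmegaType r c F => (usize F i j A.1 : ℝ)) +
      switchAdjMat r c F i j).PosSemidef := by
  rw [← moveCount_mul_transpose hij, ← conjTranspose_eq_transpose_of_trivial]
  exact posSemidef_self_mul_conjTranspose _

/-- Adjacent states lie on the same side of `u_ij = l_ij`; on the side `u_ij ≤ l_ij` use
the moves from row `i` to row `j`, on the other side those from row `j` to row `i`. -/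
lemma posSemidef_diagonal_min_add_switchAdjMat (hij : i ≠ j) :
    (diagonal (fun A : OmegaType r c F => (min (usize F i j A.1) (lsize F i j A.1) : ℝ)) +
      switchAdjMat r c F i j).PosSemidef := by
  set S : OmegaType r c F → ℝ := fun A => if usize F i j A.1 ≤ lsize F i j A.1 then 1 else 0
  have hU := (posSemidef_diagonal_usize_add_switchAdjMat (r := r) (c := c) (F := F)
    hij).mul_mul_conjTranspose_same (diagonal S)
  have hL := (posSemidef_diagonal_usize_add_switchAdjMat (r := r) (c := c) (F := F)
    hij.symm).mul_mul_conjTranspose_same (diagonal (1 - S))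
  convert hU.add hL using 1
  ext A B
  have hUL : usize F j i A.1 = lsize F i j A.1 := by rw [usize, lsize, Uset_swap]
  simp only [Matrix.add_apply, mul_diagonal, diagonal_mul, diagonal_conjTranspose,
    diagonal_apply, switchAdjMat, switchAdjIJ_comm, of_apply, hUL, S, Pi.sub_apply, Pi.one_apply,
    star_trivial]
  by_cases hAB : A = B
  · subst hAB
    by_cases h : usize F i j A.1 ≤ lsize F i j A.1 <;> simp [h, le_of_not_ge]
  · by_cases hadj : switchAdjIJ F i j A.1 B.1
    · have hsz := hadj.usize_eq_and_lsize_eq hij A.2 B.2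
      by_cases h : usize F i j A.1 ≤ lsize F i j A.1 <;> simp [hAB, hadj, hsz, h]
    · simp [hAB, hadj]

lemma posSemidef_pairTransMat (hn : 3 ≤ n) (hij : i ≠ j) :
    (pairTransMat r c F i j).PosSemidef := by
  set d : OmegaType r c F → ℝ := fun A => (min (usize F i j A.1) (lsize F i j A.1) : ℝ)
  have hsplit : diagonal (fun A : OmegaType r c F =>
        1 - (usize F i j A.1 : ℝ) * lsize F i j A.1 * switchRate n) =
      diagonal (fun A => 1 - ((usize F i j A.1 * lsize F i j A.1 +
        min (usize F i j A.1) (lsize F i j A.1) : ℕ) : ℝ) * switchRate n) +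
      switchRate n • diagonal d := by
    ext A B
    by_cases hAB : A = B <;> simp [hAB, d]
    ring
  rw [pairTransMat, hsplit, add_assoc, ← smul_add]
  refine (PosSemidef.diagonal fun A => ?_).add
    ((posSemidef_diagonal_min_add_switchAdjMat hij).smul (switchRate_nonneg n))
  exact sub_nonneg.2 (mul_switchRate_le_one hn usize_add_lsize_le)

variable (r c F)

lemma PKTV_eq_smul_sum :
    PKTV r c F = (m.choose 2 : ℝ)⁻¹ • ∑ p ∈ rowPairs m, pairTransMat r c F p.1 p.2 := by
  ext A B
  simp only [PKTV, pairTransMat, of_apply, Matrix.smul_apply, Matrix.sum_apply, Matrix.add_apply,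
    diagonal_apply, switchAdjMat, smul_eq_mul, switchRate]
  by_cases hAB : A = B
  · subst hAB
    simp
  simp only [hAB, if_false, zero_add, mul_ite, mul_one, mul_zero]
  split_ifs with hadj
  · obtain ⟨p, hp, hadjp⟩ := hadj
    rw [sum_eq_single_of_mem p hp fun q hq hqp => if_neg fun hadjq =>
      hqp (hadjq.eq_of_mem_rowPairs A.2 B.2 hq hp hadjp), if_pos hadjp]
  · simp only [not_exists, not_and] at hadj
    rw [sum_eq_zero fun p hp => if_neg (hadj p hp), mul_zero]

end Matrices

/-- for `n ≥ 3`, the transition matrix of the KTV-switch chain on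
`Ω(r,c,F)` is positive semidefinite, i.e. all of its eigenvalues are non-negative
(so the chain need not be made lazy). -/
theorem stmt_10 {m n : ℕ} (hn : 3 ≤ n) (r : Fin m → ℕ) (c : Fin n → ℕ)
    (F : Finset (Fin m × Fin n)) :
    (PKTV r c F).PosSemidef := by
  rw [PKTV_eq_smul_sum]
  refine PosSemidef.smul (posSemidef_sum _ fun p hp => ?_) (by positivity)
  exact posSemidef_pairTransMat hn (mem_filter.1 hp).2.ne
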